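/- Let μ = π_2 ⊗ K be the joint law of (X_2, X_3) for the Kendall random walk with α = 1 and unit step δ_1. Then on the probability space (ℝ², μ), the coordinate random variable U(u,v) = u and the increment W(u,v) = v − u are not independent; equivalently, there exist w > 0 and z > 1 with μ({(u,v) : v − u < w and u < z}) ≠ μ({(u,v) : v − u < w}) · μ({(u,v) : u < z}). -/

import Mathlib

open MeasureTheory Set

/-- The Pareto probability measure `π_2`, with density `2 x⁻³ 1_{(1,∞)}(x)`. -/
noncomputable def pareto2 : Measure ℝ :=
  volume.withDensity (fun x => ENNReal.ofReal (if 1 < x then 2 / x ^ 3 else 0))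

/-- The distribution `λ_k = δ_1^{△_1 k}` of the state `X_k` of the Kendall random walk
(`α = 1`, unit step `δ_1`), with density `k (k-1) x⁻³ (1 - 1/x)^(k-2) 1_{(1,∞)}(x)`
for `k ≥ 2`. -/
noncomputable def lamK (k : ℕ) : Measure ℝ :=
  volume.withDensity (fun x => ENNReal.ofReal
    (if 1 < x then (k : ℝ) * ((k : ℝ) - 1) / x ^ 3 * (1 - 1 / x) ^ (k - 2) else 0))

/-- The one-step transition kernel `K(u, ·) = u⁻¹ (T_u π_2) + (1 - u⁻¹) δ_u` of the
Kendall random walk with `α = 1` and unit step `δ_1`. -/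
noncomputable def kendallStep (u : ℝ) : Measure ℝ :=
  ENNReal.ofReal u⁻¹ • Measure.map (fun x => u * x) pareto2
    + ENNReal.ofReal (1 - u⁻¹) • Measure.dirac u

/-- The joint law `μ_k = λ_k ⊗ K` of two consecutive states `(X_k, X_{k+1})`:
`μ_k(C) = ∫ K(u, {v : (u,v) ∈ C}) λ_k(du)`. -/
noncomputable def jointLaw (k : ℕ) : Measure (ℝ × ℝ) :=
  (lamK k).bind (fun u => (kendallStep u).map (fun v => (u, v)))

/-! Given `U = u > 1`, the kernel puts mass `1 - u / (u + w) ^ 2` on `{W < w}`; this depends on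
`u`, so `U` and `W` cannot be independent. Integrating against the Pareto density with `w = 1`,
`z = 2` gives `μ(W < 1, U < 2) = 8 log 2 - 4 log 3 - 7/12 ≈ 0.568`, whereas
`μ(W < 1) μ(U < 2) = (4 log 2 - 2) · 3/4 ≈ 0.579`. -/

open Filter Topology
open scoped ENNReal

section Calculus

variable {F f : ℝ → ℝ}

lemma lintegral_Ioo_ofReal_eq_sub {a b : ℝ} (hab : a ≤ b)
    (hderiv : ∀ x ∈ Icc a b, HasDerivAt F (f x) x) (hf : ∀ x ∈ Ioo a b, 0 ≤ f x) :
    ∫⁻ x in Ioo a b, ENNReal.ofReal (f x) = ENNReal.ofReal (F b - F a) := by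
  have hderiv' : ∀ x ∈ Ioo a b, HasDerivAt F (f x) x :=
    fun x hx => hderiv x (Ioo_subset_Icc_self hx)
  have hcont : ContinuousOn F (Icc a b) :=
    fun x hx => (hderiv x hx).continuousAt.continuousWithinAt
  have hint : IntegrableOn f (Ioc a b) :=
    intervalIntegral.integrableOn_deriv_of_nonneg hcont hderiv' hf
  rw [← ofReal_integral_eq_lintegral_ofReal (hint.mono_set Ioo_subset_Ioc_self)
      (ae_restrict_of_forall_mem measurableSet_Ioo hf),
    ← integral_Ioc_eq_integral_Ioo, ← intervalIntegral.integral_of_le hab,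
    intervalIntegral.integral_eq_sub_of_hasDerivAt_of_le hab hcont hderiv'
      ((intervalIntegrable_iff_integrableOn_Ioc_of_le hab).2 hint)]

lemma lintegral_Ioi_ofReal_eq_sub {a l : ℝ} (hderiv : ∀ x ∈ Ici a, HasDerivAt F (f x) x)
    (hf : ∀ x ∈ Ioi a, 0 ≤ f x) (hF : Tendsto F atTop (𝓝 l)) :
    ∫⁻ x in Ioi a, ENNReal.ofReal (f x) = ENNReal.ofReal (l - F a) := by
  rw [← ofReal_integral_eq_lintegral_ofReal (integrableOn_Ioi_deriv_of_nonneg' hderiv hf hF)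
      (ae_restrict_of_forall_mem measurableSet_Ioi hf),
    integral_Ioi_of_hasDerivAt_of_nonneg' hderiv hf hF]

end Calculus

lemma hasDerivAt_neg_inv_sq {x : ℝ} (hx : x ≠ 0) :
    HasDerivAt (fun x : ℝ => -(x ^ 2)⁻¹) (2 / x ^ 3) x := by
  refine ((hasDerivAt_pow 2 x).inv (pow_ne_zero 2 hx)).neg.congr_deriv ?_
  field_simp
  ring

lemma pareto2_eq_withDensity :
    pareto2 = (volume.restrict (Ioi 1)).withDensity fun x => ENNReal.ofReal (2 / x ^ 3) := by
  rw [pareto2, ← withDensity_indicator measurableSet_Ioi]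
  congr 1
  funext x
  by_cases hx : 1 < x <;> simp [hx]

lemma lamK_two : lamK 2 = pareto2 := by
  rw [lamK, pareto2]
  norm_num

lemma pareto2_apply {s : Set ℝ} (hs : MeasurableSet s) :
    pareto2 s = ∫⁻ x in s ∩ Ioi 1, ENNReal.ofReal (2 / x ^ 3) := by
  rw [pareto2_eq_withDensity, withDensity_apply _ hs, Measure.restrict_restrict hs]

lemma pareto2_Iio {t : ℝ} (ht : 1 ≤ t) : pareto2 (Iio t) = ENNReal.ofReal (1 - 1 / t ^ 2) := by
  rw [pareto2_apply measurableSet_Iio, Iio_inter_Ioi,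
    lintegral_Ioo_ofReal_eq_sub ht (fun x hx => hasDerivAt_neg_inv_sq (by linarith [hx.1]))
      (fun x hx => by have := hx.1; positivity)]
  congr 1
  field_simp
  ring

instance isProbabilityMeasure_pareto2 : IsProbabilityMeasure pareto2 := by
  constructor
  rw [pareto2_apply MeasurableSet.univ, univ_inter,
    lintegral_Ioi_ofReal_eq_sub (fun x hx => hasDerivAt_neg_inv_sq (by linarith [mem_Ici.1 hx]))
      (fun x hx => by have : (1 : ℝ) < x := hx; positivity)
      (tendsto_inv_atTop_zero.comp (tendsto_pow_atTop two_ne_zero)).neg]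
  norm_num

lemma ae_pareto2_one_lt : ∀ᵐ x ∂pareto2, 1 < x := by
  rw [pareto2_eq_withDensity]
  exact withDensity_absolutelyContinuous _ _ (ae_restrict_mem measurableSet_Ioi)

lemma kendallStep_apply (u : ℝ) {s : Set ℝ} (hs : MeasurableSet s) :
    kendallStep u s = ENNReal.ofReal u⁻¹ * pareto2 ((u * ·) ⁻¹' s)
      + ENNReal.ofReal (1 - u⁻¹) * s.indicator 1 u := by
  rw [kendallStep, Measure.add_apply, Measure.smul_apply, Measure.smul_apply,
    Measure.map_apply (measurable_const_mul u) hs, Measure.dirac_apply' u hs, smul_eq_mul,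
    smul_eq_mul]

lemma isProbabilityMeasure_kendallStep {u : ℝ} (hu : 1 ≤ u) :
    IsProbabilityMeasure (kendallStep u) := by
  constructor
  rw [kendallStep_apply u MeasurableSet.univ, preimage_univ, measure_univ, indicator_univ,
    Pi.one_apply, mul_one, mul_one, ← ENNReal.ofReal_add (by positivity)
      (sub_nonneg.2 (inv_le_one_of_one_le₀ hu))]
  norm_num

lemma kendallStep_Iio {u t : ℝ} (hu : 1 ≤ u) (hut : u < t) :
    kendallStep u (Iio t) = ENNReal.ofReal (1 - u / t ^ 2) := by
  have hu0 : 0 < u := by linarith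
  have hpre : (u * ·) ⁻¹' Iio t = Iio (t / u) := by
    ext x
    simp [lt_div_iff₀ hu0, mul_comm]
  have htu : 1 ≤ t / u := by rw [le_div_iff₀ hu0]; linarith
  rw [kendallStep_apply u measurableSet_Iio, hpre, pareto2_Iio htu,
    indicator_of_mem (mem_Iio.2 hut), Pi.one_apply, mul_one,
    ← ENNReal.ofReal_mul (by positivity),
    ← ENNReal.ofReal_add (mul_nonneg (by positivity) (sub_nonneg.2 ?_))
      (sub_nonneg.2 (inv_le_one_of_one_le₀ hu))]
  · congr 1
    field_simp
    ring
  · rw [div_le_one (by positivity)]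
    exact one_le_pow₀ htu

lemma measurable_kendallStep_graph :
    Measurable fun u : ℝ => (kendallStep u).map (fun v => (u, v)) := by
  refine Measure.measurable_of_measurable_coe _ fun s hs => ?_
  simp_rw [Measure.map_apply measurable_prodMk_left hs,
    kendallStep_apply _ (measurable_prodMk_left hs)]
  have hscaled : Measurable fun u =>
      pareto2 (Prod.mk u ⁻¹' ((fun p : ℝ × ℝ => (p.1, p.1 * p.2)) ⁻¹' s)) :=
    measurable_measure_prodMk_left
      ((by fun_prop : Measurable fun p : ℝ × ℝ => (p.1, p.1 * p.2)) hs)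
  have hatom : Measurable fun u : ℝ => s.indicator (1 : ℝ × ℝ → ℝ≥0∞) (u, u) :=
    (measurable_one.indicator hs).comp (measurable_id.prodMk measurable_id)
  exact (ENNReal.measurable_ofReal.comp measurable_inv).mul hscaled |>.add
    ((ENNReal.measurable_ofReal.comp (measurable_const.sub measurable_inv)).mul hatom)

lemma jointLaw_apply (k : ℕ) {s : Set (ℝ × ℝ)} (hs : MeasurableSet s) :
    jointLaw k s = ∫⁻ u, kendallStep u (Prod.mk u ⁻¹' s) ∂lamK k := by
  rw [jointLaw, Measure.bind_apply hs measurable_kendallStep_graph.aemeasurable]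
  simp_rw [Measure.map_apply measurable_prodMk_left hs]

lemma jointLaw_two_fst_preimage {A : Set ℝ} (hA : MeasurableSet A) :
    jointLaw 2 (Prod.fst ⁻¹' A) = pareto2 A := by
  rw [jointLaw_apply 2 (measurable_fst hA), lamK_two, ← lintegral_indicator_one hA]
  refine lintegral_congr_ae ?_
  filter_upwards [ae_pareto2_one_lt] with u hu
  have := isProbabilityMeasure_kendallStep hu.le
  by_cases huA : u ∈ A <;> simp [huA, preimage]

noncomputable def incrementLtDensity (w u : ℝ) : ℝ := 2 / u ^ 3 * (1 - u / (u + w) ^ 2)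

lemma incrementLtDensity_nonneg {w u : ℝ} (hw : 0 ≤ w) (hu : 1 < u) :
    0 ≤ incrementLtDensity w u := by
  have : u / (u + w) ^ 2 ≤ 1 := by
    rw [div_le_one (by positivity)]
    nlinarith [mul_nonneg hw (by linarith : (0 : ℝ) ≤ 2 * u + w)]
  have : 0 < u := by linarith
  exact mul_nonneg (by positivity) (by linarith)

lemma jointLaw_two_increment_lt {w : ℝ} (hw : 0 < w) {A : Set ℝ} (hA : MeasurableSet A) :
    jointLaw 2 {p | p.2 - p.1 < w ∧ p.1 ∈ A}
      = ∫⁻ u in A ∩ Ioi 1, ENNReal.ofReal (incrementLtDensity w u) := by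
  have hs : MeasurableSet {p : ℝ × ℝ | p.2 - p.1 < w ∧ p.1 ∈ A} :=
    (measurableSet_lt (measurable_snd.sub measurable_fst) measurable_const).inter
      (measurable_fst hA)
  rw [jointLaw_apply 2 hs, lamK_two, pareto2_eq_withDensity,
    lintegral_withDensity_eq_lintegral_mul_non_measurable _ (by fun_prop)
      (ae_of_all _ fun _ => ENNReal.ofReal_lt_top),
    ← Measure.restrict_restrict hA, ← lintegral_indicator hA]
  refine setLIntegral_congr_fun measurableSet_Ioi fun u hu => ?_
  by_cases huA : u ∈ A
  · have hslice : Prod.mk u ⁻¹' {p | p.2 - p.1 < w ∧ p.1 ∈ A} = Iio (u + w) := by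
      ext v
      simp [huA, sub_lt_iff_lt_add']
    rw [Pi.mul_apply, hslice, kendallStep_Iio (le_of_lt hu) (by linarith),
      indicator_of_mem huA, ← ENNReal.ofReal_mul (by have : (1 : ℝ) < u := hu; positivity),
      incrementLtDensity]
  · simp [huA, preimage]

-- partial fractions: `incrementLtDensity 1 u`
-- `= 2 / u ^ 3 - 2 / u ^ 2 + 4 / u - 4 / (u + 1) - 2 / (u + 1) ^ 2`
noncomputable def incrementPrimitive (u : ℝ) : ℝ :=
  -(u ^ 2)⁻¹ + 2 * u⁻¹ + 2 * (u + 1)⁻¹ + 4 * (Real.log u - Real.log (u + 1))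

lemma hasDerivAt_incrementPrimitive {u : ℝ} (hu : 0 < u) :
    HasDerivAt incrementPrimitive (incrementLtDensity 1 u) u := by
  have hu1 : u + 1 ≠ 0 := by positivity
  have hshift : HasDerivAt (fun x : ℝ => x + 1) 1 u := (hasDerivAt_id u).add_const 1
  refine ((((hasDerivAt_pow 2 u).inv (pow_ne_zero 2 hu.ne')).neg.add
    ((hasDerivAt_inv hu.ne').const_mul 2)).add ((hshift.inv hu1).const_mul 2)).add
    (((Real.hasDerivAt_log hu.ne').sub (hshift.log hu1)).const_mul 4) |>.congr_deriv ?_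
  rw [incrementLtDensity]
  field_simp
  ring

lemma tendsto_incrementPrimitive_atTop : Tendsto incrementPrimitive atTop (𝓝 0) := by
  have hlog : Tendsto (fun u : ℝ => Real.log u - Real.log (u + 1)) atTop (𝓝 0) := by
    have h := ((tendsto_inv_atTop_zero (𝕜 := ℝ)).const_add 1).log (by norm_num)
    rw [add_zero, Real.log_one] at h
    refine h.neg.congr' ?_ |>.trans (by rw [neg_zero])
    filter_upwards [eventually_gt_atTop 0] with u hu
    rw [← Real.log_div hu.ne' (by positivity), ← Real.log_inv]
    field_simp
  have h := (((tendsto_inv_atTop_zero.comp (tendsto_pow_atTop two_ne_zero)).neg.add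
    (tendsto_inv_atTop_zero.const_mul 2)).add
    ((tendsto_inv_atTop_zero.comp (tendsto_atTop_add_const_right _ 1 tendsto_id)).const_mul
      2)).add (hlog.const_mul 4)
  simp only [neg_zero, mul_zero, add_zero] at h
  exact h

lemma jointLaw_two_increment_lt_one :
    jointLaw 2 {p : ℝ × ℝ | p.2 - p.1 < 1} = ENNReal.ofReal (4 * Real.log 2 - 2) := by
  have h := jointLaw_two_increment_lt one_pos MeasurableSet.univ
  simp only [mem_univ, and_true, univ_inter] at h
  rw [h, lintegral_Ioi_ofReal_eq_sub
    (fun u hu => hasDerivAt_incrementPrimitive (by linarith [mem_Ici.1 hu]))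
    (fun u hu => incrementLtDensity_nonneg zero_le_one hu) tendsto_incrementPrimitive_atTop]
  norm_num [incrementPrimitive]
  ring_nf

lemma jointLaw_two_increment_lt_one_fst_lt_two :
    jointLaw 2 {p : ℝ × ℝ | p.2 - p.1 < 1 ∧ p.1 < 2}
      = ENNReal.ofReal (8 * Real.log 2 - 4 * Real.log 3 - 7 / 12) := by
  have h := jointLaw_two_increment_lt one_pos (measurableSet_Iio (a := (2 : ℝ)))
  simp only [mem_Iio, Iio_inter_Ioi] at h
  rw [h, lintegral_Ioo_ofReal_eq_sub one_le_two
    (fun u hu => hasDerivAt_incrementPrimitive (by linarith [hu.1]))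
    (fun u hu => incrementLtDensity_nonneg zero_le_one hu.1)]
  norm_num [incrementPrimitive]
  ring_nf

lemma jointLaw_two_fst_lt {z : ℝ} (hz : 1 ≤ z) :
    jointLaw 2 {p : ℝ × ℝ | p.1 < z} = ENNReal.ofReal (1 - 1 / z ^ 2) :=
  (jointLaw_two_fst_preimage measurableSet_Iio).trans (pareto2_Iio hz)

/-- On the probability space `(ℝ², μ)` with `μ = π_2 ⊗ K` the joint law of `(X_2, X_3)`
(note `λ_2 = π_2`), the coordinate `U(u,v) = u` and the increment `W(u,v) = v - u` are not
independent: there are `w > 0` and `z > 1` with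
`μ({v - u < w, u < z}) ≠ μ({v - u < w}) μ({u < z})`. -/
theorem increment_not_independent :
    ∃ w : ℝ, 0 < w ∧ ∃ z : ℝ, 1 < z ∧
      jointLaw 2 {p : ℝ × ℝ | p.2 - p.1 < w ∧ p.1 < z}
        ≠ jointLaw 2 {p : ℝ × ℝ | p.2 - p.1 < w}
          * jointLaw 2 {p : ℝ × ℝ | p.1 < z} := by
  refine ⟨1, one_pos, 2, one_lt_two, ne_of_lt ?_⟩
  have hlog2 := Real.log_two_gt_d9
  rw [jointLaw_two_increment_lt_one_fst_lt_two, jointLaw_two_increment_lt_one,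
    jointLaw_two_fst_lt one_le_two, ← ENNReal.ofReal_mul (by linarith),
    ENNReal.ofReal_lt_ofReal_iff (by norm_num; linarith)]
  norm_num
  linarith [Real.log_two_lt_d9, Real.log_three_gt_d9]
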